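/- Let p be a prime, H a finite p-group, and F_q a finite field of characteristic different from p. Suppose that whenever two F_q-colored Cayley digraphs cay(H,e) and cay(H,e') over H are isomorphic, some group automorphism of H is an isomorphism between them. Then for any two right ideals I, J of F_q[H] with J = I^g for some g ∈ Sym(H), there exists a group automorphism σ of H (acting as a permutation of H) with J = I^σ. -/

import Mathlib

/-!
Let `K ≤ Sym(H)` be the stabiliser of `J`. It contains the right regular copy `R(H)` of `H` and,
since `J = I^g`, also `g R(H) g⁻¹`; after replacing `g` by `t g` for a suitable `t ∈ K`, Sylow's
theorem puts both into one `p`-subgroup `S ≤ K`. As `|S|` is invertible in `F`, Maschke's averaging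
gives an `S`-equivariant projection `π` onto `J`, and `π₀ = g⁻¹ π g` is a projection onto `I`
commuting with `R(H)`. Operators commuting with right translations are left convolutions,
`π = e' * -` and `π₀ = e * -`, and `g` intertwining them says exactly that `g` is an isomorphism
`cay(H,e) → cay(H,e')`. The hypothesis replaces `g` by an automorphism `σ`, which still intertwines
the two projections and therefore maps `I` onto `J`.
-/

/-- Convolution product on the group algebra `F[H]`. -/
def convolve {H F : Type*} [Group H] [Fintype H] [Field F] (f g : H → F) : H → F :=
  fun x => ∑ y : H, f y * g (y⁻¹ * x)

/-- Action of a permutation `g` on functions: `f^g (x) = f (x^{g⁻¹})`. -/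
def permAct {Ω F : Type*} (g : Equiv.Perm Ω) (f : Ω → F) : Ω → F :=
  fun x => f (g.symm x)

/-- `g` is an isomorphism from the colored Cayley digraph `cay(H,e)` to `cay(H,e')`. -/
def IsCayleyIso {H F : Type*} [Group H] (g : Equiv.Perm H) (e e' : H → F) : Prop :=
  ∀ x y : H, e' (g x * (g y)⁻¹) = e (x * y⁻¹)

/-- A submodule of `F[H]` is a right ideal if it is closed under right convolution. -/
def IsRightIdeal {H F : Type*} [Group H] [Fintype H] [Field F]
    (I : Submodule F (H → F)) : Prop :=
  ∀ a ∈ I, ∀ b : H → F, convolve a b ∈ I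

open LinearMap

section PermAction

variable {F Ω : Type*}

theorem permAct_mul (a b : Equiv.Perm Ω) (f : Ω → F) :
    permAct (a * b) f = permAct a (permAct b f) := rfl

@[simp]
theorem permAct_one (f : Ω → F) : permAct 1 f = f := rfl

theorem permAct_injective (g : Equiv.Perm Ω) : Function.Injective (permAct g : (Ω → F) → Ω → F) :=
  fun f₁ f₂ h => funext fun x => by simpa [permAct] using congrFun h (g x)

theorem permAct_mem_iff_of_eq_image {g : Equiv.Perm Ω} {K L : Set (Ω → F)}
    (h : L = permAct g '' K) (f : Ω → F) : permAct g f ∈ L ↔ f ∈ K := by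
  subst h
  exact (permAct_injective g).mem_set_image

theorem permAct_single [DecidableEq Ω] [Zero F] (g : Equiv.Perm Ω) (a : Ω) (c : F) :
    permAct g (Pi.single a c) = Pi.single (g a) c := by
  ext x
  simp [permAct, Pi.single_apply, Equiv.symm_apply_eq]

variable (F Ω) in
def permRep [CommSemiring F] : Representation F (Equiv.Perm Ω) (Ω → F) where
  toFun g := funLeft F F g.symm
  map_one' := rfl
  map_mul' _ _ := rfl

@[simp]
theorem permRep_apply [CommSemiring F] (g : Equiv.Perm Ω) (f : Ω → F) :
    permRep F Ω g f = permAct g f := rfl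

def permStabilizer [CommSemiring F] (J : Submodule F (Ω → F)) : Subgroup (Equiv.Perm Ω) where
  carrier := {s | ∀ f, permAct s f ∈ J ↔ f ∈ J}
  one_mem' _ := Iff.rfl
  mul_mem' ha hb f := (ha _).trans (hb f)
  inv_mem' {s} hs f := by
    rw [← hs, ← permAct_mul, mul_inv_cancel]
    rfl

theorem conj_mem_permStabilizer [CommSemiring F] {I J : Submodule F (Ω → F)} {g s : Equiv.Perm Ω}
    (hg : ∀ f, permAct g f ∈ J ↔ f ∈ I) (hs : s ∈ permStabilizer I) :
    g * s * g⁻¹ ∈ permStabilizer J := by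
  intro f
  rw [permAct_mul, permAct_mul, hg, hs, ← hg, ← permAct_mul, mul_inv_cancel]
  rfl

end PermAction

section GroupAlgebra

variable {H F : Type*} [Group H]

variable (H) in
def rightRegular : H →* Equiv.Perm H where
  toFun h := Equiv.mulRight h⁻¹
  map_one' := by ext; simp
  map_mul' _ _ := by ext; simp [mul_assoc]

@[simp]
theorem rightRegular_apply (h x : H) : rightRegular H h x = x * h⁻¹ := rfl

theorem permAct_rightRegular (h : H) (f : H → F) (x : H) :
    permAct (rightRegular H h) f x = f (x * h) := by
  simp [permAct, rightRegular]

variable [Fintype H] [Field F]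

theorem convolve_single_right [DecidableEq H] (e : H → F) (a : H) (c : F) (x : H) :
    convolve e (Pi.single a c) x = e (x * a⁻¹) * c := by
  rw [convolve, Finset.sum_eq_single (x * a⁻¹)]
  · simp
  · intro y _ hy
    rw [Pi.single_eq_of_ne, mul_zero]
    rintro rfl
    exact hy (by group)
  · simp

theorem rightRegular_mem_permStabilizer {J : Submodule F (H → F)} (hJ : IsRightIdeal J) (h : H) :
    rightRegular H h ∈ permStabilizer J := by
  classical
  have hmem : ∀ h, ∀ f ∈ J, permAct (rightRegular H h) f ∈ J := fun h f hf => by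
    convert hJ f hf (Pi.single h⁻¹ 1) using 1
    ext x
    rw [permAct_rightRegular, convolve_single_right, inv_inv, mul_one]
  refine fun f => ⟨fun hf => ?_, hmem h f⟩
  simpa [← permAct_mul, ← map_mul] using hmem h⁻¹ _ hf

def leftConvolution (e : H → F) : Module.End F (H → F) where
  toFun := convolve e
  map_add' f₁ f₂ := by
    ext x
    simp [convolve, mul_add, Finset.sum_add_distrib]
  map_smul' c f := by
    ext x
    simp [convolve, Finset.mul_sum, mul_left_comm]

@[simp]
theorem leftConvolution_apply (e f : H → F) : leftConvolution e f = convolve e f := rfl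

theorem eq_leftConvolution_of_commute [DecidableEq H] {T : Module.End F (H → F)}
    (hT : ∀ h, Commute T (permRep F H (rightRegular H h))) :
    T = leftConvolution (T (Pi.single 1 1)) := by
  ext a x
  have hsingle : (Pi.single a 1 : H → F) = permRep F H (rightRegular H a⁻¹) (Pi.single 1 1) := by
    rw [permRep_apply, permAct_single, rightRegular_apply, one_mul, inv_inv]
  dsimp only [LinearMap.comp_apply, LinearMap.coe_single]
  rw [leftConvolution_apply, convolve_single_right, hsingle, ← Module.End.mul_apply,
    (hT a⁻¹).eq, Module.End.mul_apply, permRep_apply, permAct_rightRegular, mul_one]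

theorem isCayleyIso_iff_mul_eq [DecidableEq H] (s : Equiv.Perm H) (e e' : H → F) :
    IsCayleyIso s e e' ↔
      leftConvolution e' * permRep F H s = permRep F H s * leftConvolution e := by
  have hbasis : ∀ a x, (leftConvolution e' * permRep F H s) (Pi.single a 1) x =
      e' (x * (s a)⁻¹) ∧ (permRep F H s * leftConvolution e) (Pi.single a 1) x =
      e (s.symm x * a⁻¹) := fun a x => by
    simp [permAct_single, convolve_single_right, permAct]
  constructor
  · intro hs
    ext a x
    dsimp only [LinearMap.comp_apply, LinearMap.coe_single]
    rw [(hbasis a x).1, (hbasis a x).2, ← hs, Equiv.apply_symm_apply]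
  · intro hT x y
    have := congrFun (LinearMap.congr_fun hT (Pi.single y 1)) (s x)
    rwa [(hbasis y (s x)).1, (hbasis y (s x)).2, Equiv.symm_apply_apply] at this

theorem isCayleyIso_iff_of_commute [DecidableEq H] {T₁ T₂ : Module.End F (H → F)}
    (h₁ : ∀ h, Commute T₁ (permRep F H (rightRegular H h)))
    (h₂ : ∀ h, Commute T₂ (permRep F H (rightRegular H h))) (s : Equiv.Perm H) :
    IsCayleyIso s (T₁ (Pi.single 1 1)) (T₂ (Pi.single 1 1)) ↔
      T₂ * permRep F H s = permRep F H s * T₁ := by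
  conv_rhs => rw [eq_leftConvolution_of_commute h₁, eq_leftConvolution_of_commute h₂]
  exact isCayleyIso_iff_mul_eq s _ _

end GroupAlgebra

section Projections

variable {k G V W : Type*} [Field k] [Group G] [AddCommGroup V] [Module k V]
  [AddCommGroup W] [Module k W]

theorem Representation.exists_isProj_commute [Finite G] [NeZero (Nat.card G : k)]
    (ρ : Representation k G V) (J : Submodule k V) (hJ : ∀ g, ∀ v ∈ J, ρ g v ∈ J) :
    ∃ π : Module.End k V, IsProj J π ∧ ∀ g, Commute π (ρ g) := by
  obtain ⟨C, hC⟩ := exists_isCompl (⟨J, hJ⟩ : Subrepresentation ρ)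
  have hJC : IsCompl J C.toSubmodule :=
    ⟨disjoint_iff.2 (congrArg Subrepresentation.toSubmodule (disjoint_iff.1 hC.1)),
      codisjoint_iff.2 (congrArg Subrepresentation.toSubmodule (codisjoint_iff.1 hC.2))⟩
  have hidem := J.isIdempotentElem_projection hJC
  refine ⟨J.projection C.toSubmodule hJC, ?_, fun g => ?_⟩
  · simpa [Submodule.range_projection] using (isProj_range_iff_isIdempotentElem _).2 hidem
  · rw [hidem.commute_iff, Submodule.range_projection, Submodule.ker_projection]
    exact ⟨fun v hv => hJ g v hv, fun v hv => C.apply_mem_toSubmodule g hv⟩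

theorem Representation.isProj_conj {ρ : Representation k G V} {I J : Submodule k V}
    {π : Module.End k V} (hπ : IsProj J π) {g : G} (hg : ∀ v, ρ g v ∈ J ↔ v ∈ I) :
    IsProj I (ρ g⁻¹ * π * ρ g) where
  map_mem v := by
    rw [← hg]
    simpa using hπ.map_mem (ρ g v)
  map_id v hv := by
    simp [hπ.map_id _ ((hg v).2 hv)]

theorem Representation.commute_conj {ρ : Representation k G V} {π : Module.End k V} {g x : G}
    (hπ : Commute π (ρ (g * x * g⁻¹))) : Commute (ρ g⁻¹ * π * ρ g) (ρ x) := by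
  have hright : ρ g * ρ x = ρ (g * x * g⁻¹) * ρ g := by
    rw [← map_mul, ← map_mul, inv_mul_cancel_right]
  have hleft : ρ g⁻¹ * ρ (g * x * g⁻¹) = ρ x * ρ g⁻¹ := by
    rw [← map_mul, ← map_mul]
    group
  calc ρ g⁻¹ * π * ρ g * ρ x = ρ g⁻¹ * (π * ρ (g * x * g⁻¹)) * ρ g := by
        rw [mul_assoc _ (ρ g), hright]
        simp only [mul_assoc]
    _ = ρ g⁻¹ * ρ (g * x * g⁻¹) * π * ρ g := by
        rw [hπ.eq]
        simp only [mul_assoc]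
    _ = ρ x * (ρ g⁻¹ * π * ρ g) := by
        rw [hleft]
        simp only [mul_assoc]

theorem LinearMap.IsProj.map_eq_of_comp_eq {I : Submodule k V} {J : Submodule k W}
    {T₁ : Module.End k V} {T₂ : Module.End k W} {A : V →ₗ[k] W} (h₁ : IsProj I T₁) (h₂ : IsProj J T₂)
    (hA : Function.Surjective A) (h : T₂ ∘ₗ A = A ∘ₗ T₁) : I.map A = J := by
  apply le_antisymm
  · rintro _ ⟨v, hv, rfl⟩
    rw [← h₁.map_id v hv, ← LinearMap.comp_apply, ← h]
    exact h₂.map_mem _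
  · intro w hw
    obtain ⟨v, rfl⟩ := hA w
    rw [← h₂.map_id _ hw, ← LinearMap.comp_apply, h]
    exact ⟨T₁ v, h₁.map_mem v, rfl⟩

end Projections

theorem IsPGroup.natCard_cast_ne_zero {p : ℕ} [Fact p.Prime] {G : Type*} [Group G] [Finite G]
    (hG : IsPGroup p G) {F : Type*} [Field F] (hchar : ringChar F ≠ p) : (Nat.card G : F) ≠ 0 := by
  obtain ⟨n, hn⟩ := IsPGroup.iff_card.1 hG
  rw [hn, Nat.cast_pow]
  exact pow_ne_zero _ fun hp => hchar (CharP.ringChar_of_prime_eq_zero Fact.out hp)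

theorem IsPGroup.exists_sylow_mem_and_conj_mem {p : ℕ} [Fact p.Prime] {P G : Type*} [Group P]
    [Group G] [Finite G] (hP : IsPGroup p P) (φ ψ : P →* G) :
    ∃ (S : Sylow p G) (t : G), ∀ x, φ x ∈ S ∧ t * ψ x * t⁻¹ ∈ S := by
  obtain ⟨S, hS⟩ := (hP.of_surjective φ.rangeRestrict φ.rangeRestrict_surjective).exists_le_sylow
  obtain ⟨S', hS'⟩ := (hP.of_surjective ψ.rangeRestrict ψ.rangeRestrict_surjective).exists_le_sylow
  obtain ⟨t, rfl⟩ := MulAction.exists_smul_eq G S' S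
  refine ⟨t • S', t, fun x => ⟨hS ⟨x, rfl⟩, ?_⟩⟩
  rw [← SetLike.mem_coe, Sylow.coe_smul]
  exact ⟨ψ x, hS' ⟨x, rfl⟩, rfl⟩

theorem CI_colored_digraphs_implies_CI_codes_pgroup_general
    {p : ℕ} (hp : p.Prime)
    {H F : Type*} [Group H] [Fintype H] (hH : IsPGroup p H)
    [Field F] (hchar : ringChar F ≠ p)
    (hCI : ∀ e e' : H → F, (∃ g : Equiv.Perm H, IsCayleyIso g e e') →
      ∃ σ : MulAut H, IsCayleyIso σ.toEquiv e e') :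
    ∀ I J : Submodule F (H → F), IsRightIdeal I → IsRightIdeal J →
      (∃ g : Equiv.Perm H, (J : Set (H → F)) = permAct g '' (I : Set (H → F))) →
      ∃ σ : MulAut H, (J : Set (H → F)) = permAct σ.toEquiv '' (I : Set (H → F)) := by
  classical
  have := Fact.mk hp
  rintro I J hI hJ ⟨g, hg⟩
  have hgIJ := permAct_mem_iff_of_eq_image hg
  obtain ⟨S, t, hS⟩ := hH.exists_sylow_mem_and_conj_mem
    ((rightRegular H).codRestrict _ (rightRegular_mem_permStabilizer hJ))
    (((MulAut.conj g).toMonoidHom.comp (rightRegular H)).codRestrict _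
      fun h => conj_mem_permStabilizer hgIJ (rightRegular_mem_permStabilizer hI h))
  set g' := (t : Equiv.Perm H) * g
  have hg'IJ : ∀ f, permAct g' f ∈ J ↔ f ∈ I := fun f => (t.2 _).trans (hgIJ f)
  have : NeZero (Nat.card S : F) := ⟨S.isPGroup'.natCard_cast_ne_zero hchar⟩
  obtain ⟨π, hπJ, hπS⟩ := Representation.exists_isProj_commute
    ((permRep F H).comp ((permStabilizer J).subtype.comp (S : Subgroup _).subtype)) J
    fun s f hf => (s.1.2 f).2 hf
  have hπR : ∀ h, Commute π (permRep F H (rightRegular H h)) := fun h => hπS ⟨_, (hS h).1⟩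
  set π₀ := permRep F H g'⁻¹ * π * permRep F H g'
  have hπ₀I : IsProj I π₀ := Representation.isProj_conj hπJ hg'IJ
  have hπ₀R : ∀ h, Commute π₀ (permRep F H (rightRegular H h)) := fun h =>
    Representation.commute_conj (hπS ⟨_, (hS h).2⟩)
  have hπ : π * permRep F H g' = permRep F H g' * π₀ := by
    simp only [π₀, ← mul_assoc, ← map_mul, mul_inv_cancel, map_one, one_mul]
  obtain ⟨σ, hσ⟩ := hCI _ _ ⟨g', (isCayleyIso_iff_of_commute hπ₀R hπR g').2 hπ⟩
  refine ⟨σ, ?_⟩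
  rw [← hπ₀I.map_eq_of_comp_eq hπJ ((permRep F H).apply_bijective _).2
    ((isCayleyIso_iff_of_commute hπ₀R hπR _).1 hσ)]
  exact Submodule.map_coe _ _

/-- Let `p` be a prime, `H` a finite `p`-group and `F` a finite field
of characteristic different from `p`.  If any two isomorphic `F`-colored Cayley
digraphs over `H` are isomorphic via a group automorphism of `H`, then any two
permutation-equivalent right ideals of `F[H]` are equivalent via a group
automorphism of `H`. -/
theorem CI_colored_digraphs_implies_CI_codes_pgroup
    {p : ℕ} (hp : p.Prime)
    {H F : Type*} [Group H] [Fintype H] [DecidableEq H] (hH : IsPGroup p H)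
    [Field F] [Fintype F] (hchar : ringChar F ≠ p)
    (hCI : ∀ e e' : H → F, (∃ g : Equiv.Perm H, IsCayleyIso g e e') →
      ∃ σ : MulAut H, IsCayleyIso σ.toEquiv e e') :
    ∀ I J : Submodule F (H → F), IsRightIdeal I → IsRightIdeal J →
      (∃ g : Equiv.Perm H, (J : Set (H → F)) = permAct g '' (I : Set (H → F))) →
      ∃ σ : MulAut H, (J : Set (H → F)) = permAct σ.toEquiv '' (I : Set (H → F)) :=
  CI_colored_digraphs_implies_CI_codes_pgroup_general hp hH hchar hCI
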